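/- arXiv:1903.05990 — 2 statements merged into one kernel-verified Lean document; each statement's English description precedes it below -/
import Mathlib

section
/- Suppose λ(t) → λ∞ ∈ [0,∞) as t → ∞, where λ is the hazard rate of τ, and set M(t) = E[e^{−ρ(τ−t)}·1_{τ>t}]/S(t) with S(t) = exp(−∫₀ᵗ λ(s)ds) > 0 for all t. Then M(t) → λ∞/(ρ + λ∞) as t → ∞, and consequently c*(t) = ρ/(1 − (1−bρ)M(t)) → (ρ + λ∞)/(1 + bλ∞). -/
/-! Conditionally on `τ > t`, the lifetime has density `s ↦ exp (-∫ₜˢ λ) λ s` on `(t, ∞)`.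
Once `λ` stays in `[a, A]` beyond `t`, this density is squeezed between `a e^{-A(s-t)}` and
`A e^{-a(s-t)}`, so `M t` lies between `a / (ρ + A)` and `A / (ρ + a)`. Letting `a` and `A`
tend to `λ∞` gives the limit of `M`, and the limit of `c*` follows by continuity. -/

open MeasureTheory Filter Real Set Topology

theorem tendsto_of_eventually_mem_Icc {ι α β : Type*} [TopologicalSpace β] [LinearOrder β]
    [OrderTopology β] {l' : Filter ι} [l'.NeBot] {l : Filter α} {f : α → β} {lo hi : ι → β}
    {L : β} (hlo : Tendsto lo l' (𝓝 L)) (hhi : Tendsto hi l' (𝓝 L))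
    (h : ∀ᶠ δ in l', ∀ᶠ x in l, f x ∈ Icc (lo δ) (hi δ)) : Tendsto f l (𝓝 L) := by
  refine tendsto_order.2 ⟨fun m hm => ?_, fun m hm => ?_⟩
  · obtain ⟨δ, hδ, hlt⟩ := (h.and (hlo.eventually (lt_mem_nhds hm))).exists
    exact hδ.mono fun x hx => hlt.trans_le hx.1
  · obtain ⟨δ, hδ, hlt⟩ := (h.and (hhi.eventually (gt_mem_nhds hm))).exists
    exact hδ.mono fun x hx => hx.2.trans_lt hlt

theorem exp_neg_mul_sub_eq {c t : ℝ} :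
    (fun s => exp (-c * (s - t))) = fun s => exp (c * t) * exp (-c * s) := by
  ext s
  rw [← exp_add]
  ring_nf

theorem integrableOn_exp_neg_mul_sub_Ioi {c : ℝ} (hc : 0 < c) (t : ℝ) :
    IntegrableOn (fun s => exp (-c * (s - t))) (Ioi t) := by
  rw [exp_neg_mul_sub_eq]
  exact (exp_neg_integrableOn_Ioi t hc).const_mul _

theorem integral_exp_neg_mul_sub_Ioi {c : ℝ} (hc : 0 < c) (t : ℝ) :
    ∫ s in Ioi t, exp (-c * (s - t)) = c⁻¹ := by
  rw [exp_neg_mul_sub_eq, integral_const_mul, integral_exp_mul_Ioi (neg_lt_zero.2 hc)]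
  field_simp
  rw [← exp_add]
  simp

theorem setIntegral_Ioi_mem_Icc_of_exp_bounds {f : ℝ → ℝ} {t a c A d : ℝ} (hc : 0 < c)
    (hd : 0 < d) (hf : AEStronglyMeasurable f (volume.restrict (Ioi t)))
    (hlow : ∀ s ∈ Ioi t, a * exp (-c * (s - t)) ≤ f s)
    (hup : ∀ s ∈ Ioi t, f s ≤ A * exp (-d * (s - t))) :
    ∫ s in Ioi t, f s ∈ Icc (a / c) (A / d) := by
  have hlowInt := (integrableOn_exp_neg_mul_sub_Ioi hc t).const_mul a
  have hupInt := (integrableOn_exp_neg_mul_sub_Ioi hd t).const_mul A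
  have hlow' := ae_restrict_of_forall_mem (μ := volume) measurableSet_Ioi hlow
  have hup' := ae_restrict_of_forall_mem (μ := volume) measurableSet_Ioi hup
  have hfInt : IntegrableOn f (Ioi t) := integrable_of_le_of_le hf hlow' hup' hlowInt hupInt
  constructor
  · calc a / c = ∫ s in Ioi t, a * exp (-c * (s - t)) := by
          rw [integral_const_mul, integral_exp_neg_mul_sub_Ioi hc, div_eq_mul_inv]
      _ ≤ ∫ s in Ioi t, f s := integral_mono_ae hlowInt hfInt hlow'
  · calc ∫ s in Ioi t, f s ≤ ∫ s in Ioi t, A * exp (-d * (s - t)) :=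
          integral_mono_ae hfInt hupInt hup'
      _ = A / d := by rw [integral_const_mul, integral_exp_neg_mul_sub_Ioi hd, div_eq_mul_inv]

theorem intervalIntegral_mem_Icc_of_forall_mem_Icc {f : ℝ → ℝ} {a A t s : ℝ}
    (hf : IntervalIntegrable f volume t s) (hts : t ≤ s) (h : ∀ u ∈ Icc t s, f u ∈ Icc a A) :
    ∫ u in t..s, f u ∈ Icc (a * (s - t)) (A * (s - t)) := by
  have hconst (c : ℝ) : IntervalIntegrable (fun _ => c) volume t s := intervalIntegrable_const
  constructor
  · simpa [mul_comm] using
      intervalIntegral.integral_mono_on hts (hconst a) hf fun u hu => (h u hu).1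
  · simpa [mul_comm] using
      intervalIntegral.integral_mono_on hts hf (hconst A) fun u hu => (h u hu).2

theorem discountedDensity_mem_Icc {lam : ℝ → ℝ} (hlam : Continuous lam) (hnn : ∀ s, 0 ≤ lam s)
    {ρ a A t s : ℝ} (h : ∀ u ∈ Ici t, lam u ∈ Icc a A) (hts : t ≤ s) :
    exp (-ρ * (s - t)) * exp (-∫ u in t..s, lam u) * lam s ∈
      Icc (a * exp (-(ρ + A) * (s - t))) (A * exp (-(ρ + a) * (s - t))) := by
  obtain ⟨hI₁, hI₂⟩ := intervalIntegral_mem_Icc_of_forall_mem_Icc (hlam.intervalIntegrable t s) hts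
    fun u hu => h u hu.1
  have hE₁ : exp (-(ρ + A) * (s - t)) ≤ exp (-ρ * (s - t)) * exp (-∫ u in t..s, lam u) := by
    rw [← exp_add]
    exact exp_le_exp.2 (by linarith)
  have hE₂ : exp (-ρ * (s - t)) * exp (-∫ u in t..s, lam u) ≤ exp (-(ρ + a) * (s - t)) := by
    rw [← exp_add]
    exact exp_le_exp.2 (by linarith)
  obtain ⟨has, hsA⟩ := h s hts
  constructor
  · calc a * exp (-(ρ + A) * (s - t)) ≤ lam s * exp (-(ρ + A) * (s - t)) := by gcongr
      _ ≤ lam s * (exp (-ρ * (s - t)) * exp (-∫ u in t..s, lam u)) := by gcongr; exact hnn s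
      _ = _ := mul_comm _ _
  · calc exp (-ρ * (s - t)) * exp (-∫ u in t..s, lam u) * lam s
          ≤ exp (-(ρ + a) * (s - t)) * A := mul_le_mul hE₂ hsA (hnn s) (exp_pos _).le
      _ = _ := mul_comm _ _

/-- `E[e^{-ρ(τ-t)} | τ > t]` for a lifetime `τ` with hazard rate `lam`. -/
noncomputable def expectedDiscount (ρ : ℝ) (lam : ℝ → ℝ) (t : ℝ) : ℝ :=
  ∫ s in Ioi t, exp (-ρ * (s - t)) * exp (-∫ u in t..s, lam u) * lam s

theorem expectedDiscount_mem_Icc {lam : ℝ → ℝ} (hlam : Continuous lam) (hnn : ∀ s, 0 ≤ lam s)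
    {ρ a A t : ℝ} (hρa : 0 < ρ + a) (h : ∀ u ∈ Ici t, lam u ∈ Icc a A) :
    expectedDiscount ρ lam t ∈ Icc (a / (ρ + A)) (A / (ρ + a)) := by
  have haA : a ≤ A := (h t self_mem_Ici).1.trans (h t self_mem_Ici).2
  have hprim := intervalIntegral.continuous_primitive
    (fun _ _ => hlam.intervalIntegrable (μ := volume) _ _) t
  refine setIntegral_Ioi_mem_Icc_of_exp_bounds (by linarith) hρa ?_
    (fun s hs => (discountedDensity_mem_Icc hlam hnn h hs.le).1)
    (fun s hs => (discountedDensity_mem_Icc hlam hnn h hs.le).2)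
  exact Continuous.aestronglyMeasurable (by fun_prop)

theorem tendsto_expectedDiscount {ρ lamInf : ℝ} {lam : ℝ → ℝ} (hρ : 0 < ρ)
    (hlam : Continuous lam) (hnn : ∀ s, 0 ≤ lam s) (hInf : 0 ≤ lamInf)
    (hlim : Tendsto lam atTop (𝓝 lamInf)) :
    Tendsto (expectedDiscount ρ lam) atTop (𝓝 (lamInf / (ρ + lamInf))) := by
  have hρlam : ρ + lamInf ≠ 0 := by positivity
  refine tendsto_of_eventually_mem_Icc (l' := 𝓝[>] 0)
    (lo := fun δ => (lamInf - δ) / (ρ + (lamInf + δ)))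
    (hi := fun δ => (lamInf + δ) / (ρ + (lamInf - δ))) ?_ ?_ ?_
  · have : ContinuousAt (fun δ : ℝ => (lamInf - δ) / (ρ + (lamInf + δ))) 0 :=
      ContinuousAt.div (by fun_prop) (by fun_prop) (by simpa using hρlam)
    simpa using this.tendsto.mono_left nhdsWithin_le_nhds
  · have : ContinuousAt (fun δ : ℝ => (lamInf + δ) / (ρ + (lamInf - δ))) 0 :=
      ContinuousAt.div (by fun_prop) (by fun_prop) (by simpa using hρlam)
    simpa using this.tendsto.mono_left nhdsWithin_le_nhds
  · filter_upwards [Ioo_mem_nhdsGT (show (0 : ℝ) < ρ + lamInf by positivity)] with δ hδ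
    have hev : ∀ᶠ u in atTop, lam u ∈ Icc (lamInf - δ) (lamInf + δ) :=
      hlim.eventually (Icc_mem_nhds (by linarith [hδ.1]) (by linarith [hδ.1]))
    filter_upwards [eventually_forall_ge_atTop.2 hev] with t ht
    exact expectedDiscount_mem_Icc hlam hnn (by linarith [hδ.2]) ht

/-- If the hazard rate `λ(t) → λ∞ ∈ [0,∞)` as `t → ∞`, with survival function
`S(t) = exp(-∫₀ᵗ λ)` and `M(t) = E[e^{-ρ(τ-t)} | τ > t] = (∫ₜ^∞ e^{-ρ(s-t)} S(s)λ(s) ds)/S(t)`,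
then `M(t) → λ∞/(ρ + λ∞)` and `c*(t) = ρ/(1 - (1-bρ)M(t)) → (ρ + λ∞)/(1 + bλ∞)`. -/
theorem stmt_14 (ρ b : ℝ) (hρ : 0 < ρ) (hb : 0 ≤ b)
    (lam : ℝ → ℝ) (hcont : Continuous lam) (hnn : ∀ t, 0 ≤ lam t)
    (lamInf : ℝ) (hInf : 0 ≤ lamInf)
    (hlim : Tendsto lam atTop (nhds lamInf))
    (S M : ℝ → ℝ)
    (hS : ∀ t, S t = Real.exp (-∫ s in (0:ℝ)..t, lam s))
    (hM : ∀ t, M t = (∫ s in Set.Ioi t, Real.exp (-ρ * (s - t)) * S s * lam s) / S t) :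
    Tendsto M atTop (nhds (lamInf / (ρ + lamInf))) ∧
    Tendsto (fun t => ρ / (1 - (1 - b * ρ) * M t)) atTop
      (nhds ((ρ + lamInf) / (1 + b * lamInf))) := by
  have hMeq : M = expectedDiscount ρ lam := funext fun t => by
    rw [hM, expectedDiscount, ← integral_div]
    refine setIntegral_congr_fun measurableSet_Ioi fun s _ => ?_
    rw [hS s, hS t, ← intervalIntegral.integral_add_adjacent_intervals
      (hcont.intervalIntegrable 0 t) (hcont.intervalIntegrable t s), neg_add, exp_add]
    field_simp
  have hML : Tendsto M atTop (𝓝 (lamInf / (ρ + lamInf))) :=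
    hMeq ▸ tendsto_expectedDiscount hρ hcont hnn hInf hlim
  have hden :
      1 - (1 - b * ρ) * (lamInf / (ρ + lamInf)) = ρ * (1 + b * lamInf) / (ρ + lamInf) := by
    field_simp
    ring
  have hden_pos : 0 < 1 - (1 - b * ρ) * (lamInf / (ρ + lamInf)) := by
    rw [hden]
    positivity
  have hlimit :
      (ρ + lamInf) / (1 + b * lamInf) = ρ / (1 - (1 - b * ρ) * (lamInf / (ρ + lamInf))) := by
    rw [hden]
    field_simp
  refine ⟨hML, hlimit ▸ tendsto_const_nhds.div ((hML.const_mul _).const_sub 1) hden_pos.ne'⟩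
end

section
/- Define φ(t) = ∫ₜ^∞ e^{−ρs}S(s)(1 + bλ(s)) ds with ρ > 0, b ≥ 0, S(t) = exp(−∫₀ᵗ λ(s)ds) > 0 and λ ≥ 0 locally integrable. Then φ(t) = e^{−ρt}S(t)·(1 − (1−bρ)M_τ(−ρ,t))/ρ, and in particular φ(t) ≤ e^{−ρt}S(t)(1+bρ)/ρ and c*(t) := ρ/(1 − (1−bρ)M_τ(−ρ,t)) satisfies c*(t) = e^{−ρt}S(t)/φ(t) and φ(t)c*(t) ≤ e^{−ρt}. -/
/-!
Write `D(s) = e^{-ρs} S(s) = exp (-∫₀ˢ (ρ + λ))`. Although `λ` is only locally integrable, `D`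
is absolutely continuous with `D' = -(ρ + λ) D` almost everywhere, and `D(s) → 0` as `s → ∞`, so
`ρ ∫ₜ^∞ D + ∫ₜ^∞ λ D = D(t)`. Since `φ(t) = ∫ₜ^∞ D + b ∫ₜ^∞ λ D` and `∫ₜ^∞ λ D = D(t) M(t)`,
this is the closed form of `φ(t)`; the remaining claims are algebra, using `0 ≤ M ≤ 1` and
`S(t) ≤ 1` for `t ≥ 0`.
-/

open MeasureTheory Set Filter Topology
open scoped NNReal

theorem LipschitzOnWith.comp_absolutelyContinuousOnInterval {X Y : Type*} [PseudoMetricSpace X]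
    [PseudoMetricSpace Y] {φ : X → Y} {K : ℝ≥0} {s : Set X} {f : ℝ → X} {a b : ℝ}
    (hφ : LipschitzOnWith K φ s) (hf : AbsolutelyContinuousOnInterval f a b)
    (hfs : MapsTo f (uIcc a b) s) : AbsolutelyContinuousOnInterval (φ ∘ f) a b := by
  unfold AbsolutelyContinuousOnInterval at hf ⊢
  refine squeeze_zero' (Eventually.of_forall fun E ↦ Finset.sum_nonneg fun _ _ ↦ dist_nonneg)
    ?_ (by simpa using hf.const_mul (K : ℝ))
  filter_upwards [mem_inf_of_right (mem_principal_self _)] with E hE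
  rw [Finset.mul_sum]
  gcongr with i hi
  exact hφ.dist_le_mul _ (hfs (hE.1 i hi).1) _ (hfs (hE.1 i hi).2)

theorem LocallyLipschitz.comp_absolutelyContinuousOnInterval {F Y : Type*}
    [SeminormedAddCommGroup F] [PseudoMetricSpace Y] {φ : F → Y} {f : ℝ → F} {a b : ℝ}
    (hφ : LocallyLipschitz φ) (hf : AbsolutelyContinuousOnInterval f a b) :
    AbsolutelyContinuousOnInterval (φ ∘ f) a b := by
  obtain ⟨K, hK⟩ := hφ.locallyLipschitzOn.exists_lipschitzOnWith_of_compact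
    (isCompact_uIcc.image_of_continuousOn hf.continuousOn)
  exact hK.comp_absolutelyContinuousOnInterval hf (mapsTo_image f _)

theorem integral_mul_exp_neg_intervalIntegral {f : ℝ → ℝ}
    (hf : ∀ x y, IntervalIntegrable f volume x y) (c a b : ℝ) :
    ∫ s in a..b, f s * Real.exp (-∫ u in c..s, f u) =
      Real.exp (-∫ u in c..a, f u) - Real.exp (-∫ u in c..b, f u) := by
  set A := min c (min a b)
  set B := max c (max a b)
  -- the base point `c` of the primitive need not lie between `a` and `b`
  have hab : uIcc a b ⊆ uIcc A B := uIcc_subset_uIcc (by simp [A, B]) (by simp [A, B])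
  have hc : c ∈ uIcc A B := by simp [A, B]
  have hF : AbsolutelyContinuousOnInterval (fun x ↦ ∫ u in c..x, f u) a b :=
    ((hf A B).absolutelyContinuousOnInterval_intervalIntegral hc).mono hab
  have hg : AbsolutelyContinuousOnInterval (fun x ↦ Real.exp (-∫ u in c..x, f u)) a b :=
    Real.contDiff_exp.locallyLipschitz.comp_absolutelyContinuousOnInterval hF.neg
  rw [← neg_sub, ← hg.integral_deriv_eq_sub, ← intervalIntegral.integral_neg]
  refine intervalIntegral.integral_congr_ae ?_
  filter_upwards [(hf A B).ae_hasDerivAt_integral] with x hx hxab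
  rw [((hx (hab (uIoc_subset_uIcc hxab)) c hc).fun_neg.exp).deriv]
  ring

section ImproperIntegral

variable {f : ℝ → ℝ} {c : ℝ}

theorem tendsto_intervalIntegral_mul_exp_neg_intervalIntegral
    (hf : ∀ x y, IntervalIntegrable f volume x y)
    (htop : Tendsto (fun x ↦ ∫ u in c..x, f u) atTop atTop) (a : ℝ) :
    Tendsto (fun x ↦ ∫ s in a..x, f s * Real.exp (-∫ u in c..s, f u)) atTop
      (𝓝 (Real.exp (-∫ u in c..a, f u))) := by
  simp_rw [integral_mul_exp_neg_intervalIntegral hf]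
  simpa using tendsto_const_nhds.sub
    (Real.tendsto_exp_atBot.comp (tendsto_neg_atTop_atBot.comp htop))

theorem integrableOn_Ioi_mul_exp_neg_intervalIntegral
    (hf : ∀ x y, IntervalIntegrable f volume x y) (hf0 : ∀ x, 0 ≤ f x)
    (htop : Tendsto (fun x ↦ ∫ u in c..x, f u) atTop atTop) (a : ℝ) :
    IntegrableOn (fun s ↦ f s * Real.exp (-∫ u in c..s, f u)) (Ioi a) := by
  refine integrableOn_Ioi_of_intervalIntegral_norm_tendsto (Real.exp (-∫ u in c..a, f u)) a
    (fun x ↦ ((hf a x).mul_continuousOn ?_).1) tendsto_id ?_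
  · exact (Real.continuous_exp.comp (intervalIntegral.continuous_primitive hf c).neg).continuousOn
  · simpa [Real.norm_of_nonneg (mul_nonneg (hf0 _) (Real.exp_pos _).le)] using
      tendsto_intervalIntegral_mul_exp_neg_intervalIntegral hf htop a

theorem integral_Ioi_mul_exp_neg_intervalIntegral
    (hf : ∀ x y, IntervalIntegrable f volume x y) (hf0 : ∀ x, 0 ≤ f x)
    (htop : Tendsto (fun x ↦ ∫ u in c..x, f u) atTop atTop) (a : ℝ) :
    ∫ s in Ioi a, f s * Real.exp (-∫ u in c..s, f u) = Real.exp (-∫ u in c..a, f u) :=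
  tendsto_nhds_unique (intervalIntegral_tendsto_integral_Ioi a
      (integrableOn_Ioi_mul_exp_neg_intervalIntegral hf hf0 htop a) tendsto_id)
    (tendsto_intervalIntegral_mul_exp_neg_intervalIntegral hf htop a)

end ImproperIntegral

theorem tendsto_intervalIntegral_const_add_atTop {ρ : ℝ} {lam : ℝ → ℝ} (hρ : 0 < ρ)
    (hlam : ∀ x y, IntervalIntegrable lam volume x y) (hnn : ∀ x, 0 ≤ lam x) :
    Tendsto (fun x ↦ ∫ u in (0 : ℝ)..x, (ρ + lam u)) atTop atTop := by
  refine tendsto_atTop_mono' _ ?_ (tendsto_id.const_mul_atTop hρ)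
  filter_upwards [eventually_ge_atTop 0] with x hx
  rw [intervalIntegral.integral_add intervalIntegrable_const (hlam 0 x),
    intervalIntegral.integral_const, smul_eq_mul, sub_zero, mul_comm]
  exact le_add_of_nonneg_right (intervalIntegral.integral_nonneg hx fun u _ ↦ hnn u)

noncomputable def discountedSurvival (ρ : ℝ) (lam : ℝ → ℝ) (s : ℝ) : ℝ :=
  Real.exp (-ρ * s) * Real.exp (-∫ u in (0 : ℝ)..s, lam u)

section DiscountedSurvival

variable {ρ : ℝ} {lam : ℝ → ℝ}

theorem discountedSurvival_eq_exp_neg_intervalIntegral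
    (hlam : ∀ x y, IntervalIntegrable lam volume x y) (s : ℝ) :
    discountedSurvival ρ lam s = Real.exp (-∫ u in (0 : ℝ)..s, (ρ + lam u)) := by
  rw [discountedSurvival, ← Real.exp_add, intervalIntegral.integral_add intervalIntegrable_const
    (hlam 0 s), intervalIntegral.integral_const, smul_eq_mul, sub_zero, neg_add, neg_mul,
    mul_comm]

theorem continuous_discountedSurvival (hlam : ∀ x y, IntervalIntegrable lam volume x y) :
    Continuous (discountedSurvival ρ lam) := by
  unfold discountedSurvival
  have := intervalIntegral.continuous_primitive hlam 0
  fun_prop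

theorem integrableOn_Ioi_add_mul_discountedSurvival (hρ : 0 < ρ)
    (hlam : ∀ x y, IntervalIntegrable lam volume x y) (hnn : ∀ x, 0 ≤ lam x) (t : ℝ) :
    IntegrableOn (fun s ↦ (ρ + lam s) * discountedSurvival ρ lam s) (Ioi t) := by
  simp_rw [discountedSurvival_eq_exp_neg_intervalIntegral hlam]
  exact integrableOn_Ioi_mul_exp_neg_intervalIntegral
    (fun x y ↦ intervalIntegrable_const.add (hlam x y)) (fun x ↦ by linarith [hnn x])
    (tendsto_intervalIntegral_const_add_atTop hρ hlam hnn) t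

theorem integral_Ioi_add_mul_discountedSurvival (hρ : 0 < ρ)
    (hlam : ∀ x y, IntervalIntegrable lam volume x y) (hnn : ∀ x, 0 ≤ lam x) (t : ℝ) :
    ∫ s in Ioi t, (ρ + lam s) * discountedSurvival ρ lam s = discountedSurvival ρ lam t := by
  simp_rw [discountedSurvival_eq_exp_neg_intervalIntegral hlam]
  exact integral_Ioi_mul_exp_neg_intervalIntegral
    (fun x y ↦ intervalIntegrable_const.add (hlam x y)) (fun x ↦ by linarith [hnn x])
    (tendsto_intervalIntegral_const_add_atTop hρ hlam hnn) t

theorem integrableOn_Ioi_discountedSurvival (hρ : 0 < ρ)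
    (hlam : ∀ x y, IntervalIntegrable lam volume x y) (hnn : ∀ x, 0 ≤ lam x) (t : ℝ) :
    IntegrableOn (discountedSurvival ρ lam) (Ioi t) := by
  refine ((integrableOn_Ioi_add_mul_discountedSurvival hρ hlam hnn t).const_mul ρ⁻¹).mono'
    (continuous_discountedSurvival hlam).aestronglyMeasurable (ae_of_all _ fun s ↦ ?_)
  have hD : 0 < discountedSurvival ρ lam s := by unfold discountedSurvival; positivity
  rw [Real.norm_of_nonneg hD.le, inv_mul_eq_div, le_div_iff₀' hρ]
  exact mul_le_mul_of_nonneg_right (le_add_of_nonneg_right (hnn s)) hD.le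

theorem integrableOn_Ioi_discountedSurvival_mul (hρ : 0 < ρ)
    (hlam : ∀ x y, IntervalIntegrable lam volume x y) (hnn : ∀ x, 0 ≤ lam x) (t : ℝ) :
    IntegrableOn (fun s ↦ discountedSurvival ρ lam s * lam s) (Ioi t) := by
  refine ((integrableOn_Ioi_add_mul_discountedSurvival hρ hlam hnn t).sub
    ((integrableOn_Ioi_discountedSurvival hρ hlam hnn t).const_mul ρ)).congr_fun
    (fun s _ ↦ ?_) measurableSet_Ioi
  simp only [Pi.sub_apply]
  ring

theorem mul_integral_Ioi_discountedSurvival_add_integral_Ioi_mul (hρ : 0 < ρ)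
    (hlam : ∀ x y, IntervalIntegrable lam volume x y) (hnn : ∀ x, 0 ≤ lam x) (t : ℝ) :
    (ρ * ∫ s in Ioi t, discountedSurvival ρ lam s) +
      ∫ s in Ioi t, discountedSurvival ρ lam s * lam s = discountedSurvival ρ lam t := by
  rw [← integral_Ioi_add_mul_discountedSurvival hρ hlam hnn t, ← integral_const_mul,
    ← integral_add ((integrableOn_Ioi_discountedSurvival hρ hlam hnn t).const_mul ρ)
      (integrableOn_Ioi_discountedSurvival_mul hρ hlam hnn t)]
  congr with s
  ring

theorem mul_integral_Ioi_discountedSurvival_mul_one_add (hρ : 0 < ρ)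
    (hlam : ∀ x y, IntervalIntegrable lam volume x y) (hnn : ∀ x, 0 ≤ lam x) (b t : ℝ) :
    ρ * ∫ s in Ioi t, discountedSurvival ρ lam s * (1 + b * lam s) =
      discountedSurvival ρ lam t -
        (1 - b * ρ) * ∫ s in Ioi t, discountedSurvival ρ lam s * lam s := by
  have hD := integrableOn_Ioi_discountedSurvival hρ hlam hnn t
  have hDlam := integrableOn_Ioi_discountedSurvival_mul hρ hlam hnn t
  have hsplit : ∫ s in Ioi t, discountedSurvival ρ lam s * (1 + b * lam s) =
      (∫ s in Ioi t, discountedSurvival ρ lam s) +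
        b * ∫ s in Ioi t, discountedSurvival ρ lam s * lam s := by
    rw [← integral_const_mul, ← integral_add hD (hDlam.const_mul b)]
    congr with s
    ring
  rw [hsplit, ← mul_integral_Ioi_discountedSurvival_add_integral_Ioi_mul hρ hlam hnn t]
  ring

end DiscountedSurvival

/-- Define `φ(t) = ∫ₜ^∞ e^{-ρs}S(s)(1 + bλ(s)) ds` with `ρ > 0`, `b ≥ 0`,
`S(t) = exp(-∫₀ᵗ λ)` and `M_τ(-ρ,t) ∈ [0,1]` the conditional exponential moment.
Then `φ(t) = e^{-ρt}S(t)(1 - (1-bρ)M_τ(-ρ,t))/ρ`, hence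
`φ(t) ≤ e^{-ρt}S(t)(1+bρ)/ρ`, and `c*(t) = ρ/(1 - (1-bρ)M_τ(-ρ,t))` satisfies
`c*(t) = e^{-ρt}S(t)/φ(t)` and `φ(t)c*(t) ≤ e^{-ρt}`. -/
theorem stmt_16 (ρ b : ℝ) (hρ : 0 < ρ) (hb : 0 ≤ b)
    (lam : ℝ → ℝ) (hnn : ∀ t, 0 ≤ lam t)
    (hloc : ∀ t : ℝ, IntervalIntegrable lam volume 0 t)
    (S M φ : ℝ → ℝ)
    (hS : ∀ t, S t = Real.exp (-∫ s in (0:ℝ)..t, lam s))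
    (hM : ∀ t, M t = (∫ s in Set.Ioi t, Real.exp (-ρ * (s - t)) * S s * lam s) / S t)
    (hM01 : ∀ t, M t ∈ Set.Icc (0:ℝ) 1)
    (hφ : ∀ t, φ t = ∫ s in Set.Ioi t, Real.exp (-ρ * s) * S s * (1 + b * lam s))
    (t : ℝ) (ht : 0 ≤ t) :
    φ t = Real.exp (-ρ * t) * S t * (1 - (1 - b * ρ) * M t) / ρ ∧
    φ t ≤ Real.exp (-ρ * t) * S t * (1 + b * ρ) / ρ ∧
    ρ / (1 - (1 - b * ρ) * M t) = Real.exp (-ρ * t) * S t / φ t ∧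
    φ t * (ρ / (1 - (1 - b * ρ) * M t)) ≤ Real.exp (-ρ * t) := by
  have hlam : ∀ x y, IntervalIntegrable lam volume x y := fun x y ↦ (hloc x).symm.trans (hloc y)
  have hD : ∀ s, Real.exp (-ρ * s) * S s = discountedSurvival ρ lam s := fun s ↦ by
    rw [hS, discountedSurvival]
  have hSpos : 0 < S t := by rw [hS]; positivity
  have hSle : S t ≤ 1 := by
    rw [hS, Real.exp_le_one_iff, neg_nonpos]
    exact intervalIntegral.integral_nonneg ht fun u _ ↦ hnn u
  have hφD : ρ * φ t = Real.exp (-ρ * t) * S t -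
      (1 - b * ρ) * ∫ s in Ioi t, discountedSurvival ρ lam s * lam s := by
    simp_rw [hφ, hD, mul_integral_Ioi_discountedSurvival_mul_one_add hρ hlam hnn b t]
  have hMD : Real.exp (-ρ * t) * S t * M t = ∫ s in Ioi t, discountedSurvival ρ lam s * lam s := by
    rw [hM, mul_assoc, mul_div_cancel₀ _ hSpos.ne', ← integral_const_mul]
    refine setIntegral_congr_fun measurableSet_Ioi fun s _ ↦ ?_
    have hshift : Real.exp (-ρ * s) = Real.exp (-ρ * t) * Real.exp (-ρ * (s - t)) := by
      rw [← Real.exp_add]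
      ring_nf
    rw [← hD, hshift]
    ring
  have hvalue : φ t = Real.exp (-ρ * t) * S t * (1 - (1 - b * ρ) * M t) / ρ := by
    rw [eq_div_iff hρ.ne']
    linear_combination hφD + (1 - b * ρ) * hMD
  obtain ⟨hM0, hM1⟩ := hM01 t
  have he := Real.exp_pos (-ρ * t)
  refine ⟨hvalue, ?_, ?_, ?_⟩
  · rw [hvalue]
    gcongr
    nlinarith [mul_nonneg hb hρ.le]
  · rw [hvalue, div_div_eq_mul_div, mul_div_mul_left _ _ (by positivity)]
  · rw [hvalue]
    set K := 1 - (1 - b * ρ) * M t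
    rcases eq_or_ne K 0 with hK | hK
    · rw [hK, div_zero, mul_zero]
      exact he.le
    · calc _ = Real.exp (-ρ * t) * S t := by field_simp
        _ ≤ Real.exp (-ρ * t) := mul_le_of_le_one_right he.le hSle
end
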